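/- arXiv:1610.06908 — 2 statements merged into one kernel-verified Lean document; each statement's English description precedes it below -/
import Mathlib

section
/- Composite rewrites commute with lifting: for well-defined n-diagrams S, T, A, B, C with S, T globular and A, C globular, and well-defined embeddings e : S ↪ A and f : C ↪ B, one has B⟨f : C → A⟨e : S → T⟩⟩ = (B⟨f : C → A⟩)⟨Λ(f,A) ∘ e : S → T⟩. -/
/-!
Data structures for quasistrict higher categories (Bar–Vicary).
A 0-diagram is a single generator; an (n+1)-diagram is a source n-diagram
together with a list of cells, each a generator name with embedding data.
Embedding data between n-diagrams is a list of n heights; composition of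
embeddings adds heights at every level, and the lifted embedding `Λ(e,T)`
has the same data as `e`.
-/

namespace QS

inductive Diagram : Type where
  | base (g : ℕ) : Diagram
  | step (s : Diagram) (c : List (ℕ × List ℕ)) : Diagram

namespace Diagram

/-- Dimension of a diagram. -/
def dim : Diagram → ℕ
  | base _ => 0
  | step s _ => s.dim + 1

/-- The source (n−1)-diagram of an n-diagram (junk at dimension 0). -/
def src : Diagram → Diagram
  | base g => base g
  | step s _ => s

/-- The list of cells: generator names with embedding data. -/
def cells : Diagram → List (ℕ × List ℕ)
  | base _ => []
  | step _ c => c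

/-- The length `|D|` of a diagram. -/
def size : Diagram → ℕ
  | base _ => 1
  | step _ c => c.length

/-- The unique generator of a 0-diagram. -/
def gen : Diagram → ℕ
  | base g => g
  | step _ _ => 0

end Diagram

/-- A signature assigns to each generator name of each dimension `k ≥ 1` a
source and a target (k−1)-diagram. -/
structure Signature where
  gsrc : ℕ → ℕ → Diagram
  gtgt : ℕ → ℕ → Diagram

/-- Data of the composite embedding `f ∘ e`: `(f ∘ e).h = e.h + f.h`
recursively at every level, i.e. pointwise addition of height data. -/
def embComp (f e : List ℕ) : List ℕ := List.zipWith (· + ·) f e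

/-- Data of the lifted embedding `Λ(e, T) : T ↪ D⟨e : S → T⟩`: the same
height data as `e` (`Λ(e,T).h = e.h`, `Λ(e,T).e = e.e`). -/
def liftEmb (e : List ℕ) (_T : Diagram) : List ℕ := e

/-- Data of the identity embedding on an n-diagram: height 0 at every level. -/
def idEmb (n : ℕ) : List ℕ := List.replicate n 0

/-- The rewrite `D⟨e : S → T⟩`: remove the copy of `S` embedded at height
`e.h` and insert `T`, with the embeddings of `T` composed with the lift of
`e.e`. -/
def rewriteDiag (D : Diagram) (e : List ℕ) (S T : Diagram) : Diagram :=
  match D with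
  | .base _ => T
  | .step s c =>
      .step s (c.take (e.headD 0)
        ++ T.cells.map (fun x => (x.1, embComp (liftEmb e.tail T) x.2))
        ++ c.drop (e.headD 0 + S.cells.length))

/-- The slice `D[i].d`, obtained by sequential rewriting from the source. -/
def slice (σ : Signature) (D : Diagram) : ℕ → Diagram
  | 0 => D.src
  | i + 1 =>
      rewriteDiag (slice σ D i) (D.cells.getD i default).2
        (σ.gsrc D.dim (D.cells.getD i default).1)
        (σ.gtgt D.dim (D.cells.getD i default).1)

/-- The target `D.t := D[|D|].d`. -/
def tgt (σ : Signature) (D : Diagram) : Diagram := slice σ D D.cells.length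

/-- Iterated source `s^k`. -/
def srcIter : ℕ → Diagram → Diagram
  | 0, D => D
  | k + 1, D => srcIter k D.src

/-- Iterated target `t^k`. -/
def tgtIter (σ : Signature) : ℕ → Diagram → Diagram
  | 0, D => D
  | k + 1, D => tgtIter σ k (tgt σ D)

/-- Well-definedness of an embedding `e : S ↪ D`: for 0-diagrams the unique
generators agree; otherwise the component embedding is well-defined, the
image is in range, and the generators and embeddings of `S` match those of
`D` at heights shifted by `e.h` (via the lift of `e.e`). -/
def wdEmb (σ : Signature) : List ℕ → Diagram → Diagram → Prop
  | e, .base g, D => e = [] ∧ D.gen = g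
  | e, .step Ss Sc, D =>
      e.length = Ss.dim + 1 ∧
      e.headD 0 + Sc.length ≤ D.cells.length ∧
      wdEmb σ e.tail Ss (slice σ D (e.headD 0)) ∧
      ∀ i < Sc.length,
        (Sc.getD i default).1 = (D.cells.getD (i + e.headD 0) default).1 ∧
        embComp e.tail (Sc.getD i default).2
          = (D.cells.getD (i + e.headD 0) default).2

/-- Auxiliary well-definedness predicate for diagrams, by dimension. -/
def wdAux (σ : Signature) : ℕ → Diagram → Prop
  | 0, _ => True
  | n + 1, D =>
      wdAux σ n D.src ∧
      ∀ i < D.cells.length,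
        wdEmb σ (D.cells.getD i default).2
          (σ.gsrc (n + 1) (D.cells.getD i default).1) (slice σ D i) ∧
        wdAux σ n (slice σ D (i + 1))

/-- Well-definedness of a diagram: the source is well-defined and every
slice exists and is well-defined. -/
def wdDiagram (σ : Signature) (D : Diagram) : Prop := wdAux σ D.dim D

/-- Two n-diagrams are globular when n = 0, or they have equal sources and
equal targets. -/
def globular (σ : Signature) (S T : Diagram) : Prop :=
  match S with
  | .base _ => True
  | .step _ _ => S.src = T.src ∧ tgt σ S = tgt σ T

/-- Vertical composite of two n-diagrams (`S` below `D`): the source of `S`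
together with the concatenated cell lists. -/
def vcomp (S D : Diagram) : Diagram :=
  match S with
  | .base g => .base g
  | .step s c => .step s (c ++ D.cells)

/-- Data of the inclusion embedding `inc(S, D) : D ↪ S ∘ D` of an n-diagram
`D` into its composite with an m-diagram `S` of size `sLen`, `m ≤ n`. -/
def incData (m sLen : ℕ) : ℕ → List ℕ
  | 0 => []
  | k + 1 => if m = k + 1 then sLen :: List.replicate k 0
             else 0 :: incData m sLen k

/-- Composite `S ∘ D` where `S` has dimension ≤ that of `D`: `S` is attached
on the source side of the shared boundary, so the embeddings of the cells of
`D` are composed with the inclusion embeddings. -/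
def compL (S D : Diagram) : Diagram :=
  match D with
  | .base g => .base g
  | .step s c =>
      if S.dim = s.dim + 1 then vcomp S D
      else .step (compL S s)
        (c.map fun x => (x.1, embComp (incData S.dim S.size s.dim) x.2))

/-- Composite `D ∘ X` where `X` has dimension ≤ that of `D`: `X` is attached
on the target side of the shared boundary, so the cell data of `D` is
unchanged and only the deep source changes. -/
def compR (D X : Diagram) : Diagram :=
  match D with
  | .base g => .base g
  | .step s c =>
      if X.dim = s.dim + 1 then vcomp D X
      else .step (compR s X) c

/-- The composite `X ∘ Y` of two diagrams along their unique common
boundary, determined by their dimensions. -/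
def comp (X Y : Diagram) : Diagram :=
  if X.dim ≤ Y.dim then compL X Y else compR X Y

/-- The identity (n+1)-diagram on an n-diagram: source `D`, no cells. -/
def idDiag (D : Diagram) : Diagram := .step D []

/-- Composability of `X ∘ Y`: the matching condition on iterated
sources/targets along the shared boundary. -/
def composable (σ : Signature) (X Y : Diagram) : Prop :=
  if X.dim ≤ Y.dim then tgt σ X = srcIter (Y.dim - X.dim + 1) Y
  else tgtIter σ (X.dim - Y.dim + 1) X = Y.src

/-!
In both composites the cells of `B` keep their places, the copy of `C` is
replaced by the cells of `A` shifted by `f.e`, and inside that block the copy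
of `S` at height `e.h` is replaced by the cells of `T` shifted by `e.e` and
then by `f.e`. On the right the copy of `S` sits at height `f.h + e.h` of
`B⟨f : C → A⟩`, and the two shifts compose to `f.e + e.e`, so both sides are
the same splice of one list.
-/

namespace Diagram

theorem exists_eq_base_of_dim_eq_zero {D : Diagram} (h : D.dim = 0) :
    ∃ g, D = base g := by
  cases D with
  | base g => exact ⟨g, rfl⟩
  | step s c => simp [dim] at h

theorem exists_eq_step_of_dim_ne_zero {D : Diagram} (h : D.dim ≠ 0) :
    ∃ s c, D = step s c := by
  cases D with
  | base g => simp [dim] at h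
  | step s c => exact ⟨s, c, rfl⟩

end Diagram

theorem embComp_assoc (a b c : List ℕ) :
    embComp a (embComp b c) = embComp (embComp a b) c := by
  simp only [embComp, List.zipWith_zipWith_left, List.zipWith_zipWith_right, Nat.add_assoc]

theorem embComp_cons_cons (a b : ℕ) (e f : List ℕ) :
    embComp (a :: e) (b :: f) = (a + b) :: embComp e f :=
  rfl

section Splice

variable {β : Type*}

def splice (l : List β) (i s : ℕ) (t : List β) : List β :=
  l.take i ++ t ++ l.drop (i + s)

theorem map_splice {γ : Type*} (g : β → γ) (l : List β) (i s : ℕ) (t : List β) :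
    (splice l i s t).map g = splice (l.map g) i s (t.map g) := by
  simp only [splice, List.map_append, List.map_take, List.map_drop]

theorem append_splice_append (l₁ m l₂ t : List β) (i s : ℕ)
    (h : i + s ≤ m.length) :
    l₁ ++ splice m i s t ++ l₂ = splice (l₁ ++ m ++ l₂) (l₁.length + i) s t := by
  rw [splice, splice, List.append_assoc l₁ m l₂, List.take_length_add_append,
    Nat.add_assoc, List.drop_length_add_append,
    List.take_append_of_le_length (le_trans (Nat.le_add_right _ _) h),
    List.drop_append_of_le_length h]
  simp only [List.append_assoc]

theorem splice_splice {l m : List β} {i j k s : ℕ} {t : List β}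
    (hj : j ≤ l.length) (hi : i + s ≤ m.length) :
    splice l j k (splice m i s t) = splice (splice l j k m) (j + i) s t := by
  rw [splice, append_splice_append _ _ _ _ _ _ hi, List.length_take_of_le hj, ← splice]

end Splice

def shiftCell (e : List ℕ) (x : ℕ × List ℕ) : ℕ × List ℕ := (x.1, embComp e x.2)

theorem shiftCell_comp_shiftCell (e e' : List ℕ) :
    shiftCell e ∘ shiftCell e' = shiftCell (embComp e e') := by
  funext x
  simp only [Function.comp_apply, shiftCell, embComp_assoc]

theorem rewriteDiag_step (s : Diagram) (c : List (ℕ × List ℕ)) (h : ℕ) (e : List ℕ)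
    (S T : Diagram) :
    rewriteDiag (.step s c) (h :: e) S T
      = .step s (splice c h S.cells.length (T.cells.map (shiftCell e))) :=
  rfl

theorem wdEmb_step {σ : Signature} {e : List ℕ} {s D : Diagram}
    {c : List (ℕ × List ℕ)} (he : wdEmb σ e (.step s c) D) :
    ∃ h e', e = h :: e' ∧ h + c.length ≤ D.cells.length := by
  obtain ⟨hlen, hbound, -⟩ := he
  cases e with
  | nil => simp at hlen
  | cons h e' => exact ⟨h, e', rfl, hbound⟩

theorem rewriteDiag_step_comp (bs as S T C : Diagram) (bc ac : List (ℕ × List ℕ))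
    (eh fh : ℕ) (e f : List ℕ)
    (he : eh + S.cells.length ≤ ac.length) (hf : fh ≤ bc.length) :
    rewriteDiag (.step bs bc) (fh :: f) C (rewriteDiag (.step as ac) (eh :: e) S T)
      = rewriteDiag (rewriteDiag (.step bs bc) (fh :: f) C (.step as ac))
          (embComp (fh :: f) (eh :: e)) S T := by
  simp only [embComp_cons_cons, rewriteDiag_step, Diagram.cells, map_splice, List.map_map,
    shiftCell_comp_shiftCell]
  rw [splice_splice hf (by rwa [List.length_map])]

theorem rewriteDiag_comp_general (σ : Signature) (S T A B C : Diagram) (e f : List ℕ)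
    (hSdim : S.dim = A.dim)
    (hBdim : B.dim = A.dim) (hCdim : C.dim = A.dim)
    (he : wdEmb σ e S A) (hf : wdEmb σ f C B) :
    rewriteDiag B f C (rewriteDiag A e S T)
      = rewriteDiag (rewriteDiag B f C A) (embComp (liftEmb f A) e) S T := by
  cases A with
  | base g =>
    obtain ⟨g', rfl⟩ := Diagram.exists_eq_base_of_dim_eq_zero hBdim
    rfl
  | step as ac =>
    have hpos : (Diagram.step as ac).dim ≠ 0 := Nat.succ_ne_zero _
    obtain ⟨bs, bc, rfl⟩ := Diagram.exists_eq_step_of_dim_ne_zero (hBdim ▸ hpos)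
    obtain ⟨ss, sc, rfl⟩ := Diagram.exists_eq_step_of_dim_ne_zero (hSdim ▸ hpos)
    obtain ⟨cs, cc, rfl⟩ := Diagram.exists_eq_step_of_dim_ne_zero (hCdim ▸ hpos)
    obtain ⟨eh, e, rfl, heb⟩ := wdEmb_step he
    obtain ⟨fh, f, rfl, hfb⟩ := wdEmb_step hf
    exact rewriteDiag_step_comp bs as _ T _ bc ac eh fh e f heb (Nat.le_of_add_right_le hfb)

/-- **Composite rewrites.**  For well-defined n-diagrams `S, T, A, B, C` with
`S, T` globular and `A, C` globular, and well-defined embeddings `e : S ↪ A`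
and `f : C ↪ B`, one has
`B⟨f : C → A⟨e : S → T⟩⟩ = (B⟨f : C → A⟩)⟨Λ(f,A) ∘ e : S → T⟩`. -/
theorem rewriteDiag_comp (σ : Signature) (S T A B C : Diagram) (e f : List ℕ)
    (hSdim : S.dim = A.dim) (hTdim : T.dim = A.dim)
    (hBdim : B.dim = A.dim) (hCdim : C.dim = A.dim)
    (hS : wdDiagram σ S) (hT : wdDiagram σ T) (hA : wdDiagram σ A)
    (hB : wdDiagram σ B) (hC : wdDiagram σ C)
    (hST : globular σ S T) (hAC : globular σ A C)
    (he : wdEmb σ e S A) (hf : wdEmb σ f C B) :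
    rewriteDiag B f C (rewriteDiag A e S T)
      = rewriteDiag (rewriteDiag B f C A) (embComp (liftEmb f A) e) S T :=
  rewriteDiag_comp_general σ S T A B C e f hSdim hBdim hCdim he hf

end QS
end

section
/- Inclusion embeddings compose along iterated vertical composition: for well-defined n-diagrams D, S and a well-defined l-diagram M with l > n such that the composites exist, inc(S, D∘M) ∘ inc(D, M) = inc(S∘D, M) as embeddings M ↪ S∘(D∘M) = (S∘D)∘M. -/
/-!
Data structures for quasistrict higher categories (Bar–Vicary).
A 0-diagram is a single generator; an (n+1)-diagram is a source n-diagram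
together with a list of cells, each a generator name with embedding data.
Embedding data between n-diagrams is a list of n heights; composition of
embeddings adds heights at every level, and the lifted embedding `Λ(e,T)`
has the same data as `e`.
-/

namespace QS

lemma embComp_assoc_s16 (f g e : List ℕ) :
    embComp f (embComp g e) = embComp (embComp f g) e := by
  simp only [embComp]
  induction f generalizing g e with
  | nil => rfl
  | cons a f ih =>
    cases g with
    | nil => rfl
    | cons b g =>
      cases e with
      | nil => rfl
      | cons c e => simp [ih, Nat.add_assoc]

lemma embComp_incData (m a b k : ℕ) :
    embComp (incData m a k) (incData m b k) = incData m (a + b) k := by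
  induction k with
  | zero => rfl
  | succ k ih =>
    by_cases h : m = k + 1
    · simp [incData, h, embComp]
    · simpa [incData, h, embComp] using ih

lemma dim_compL (S M : Diagram) : (compL S M).dim = M.dim := by
  induction M with
  | base g => rfl
  | step s c ih =>
    by_cases h : S.dim = s.dim + 1
    · cases S with
      | base g => simp [Diagram.dim] at h
      | step ss sc =>
        simp only [Diagram.dim, add_left_inj] at h
        simp [compL, vcomp, Diagram.dim, h]
    · simp [compL, h, Diagram.dim, ih]

/-- At each level above `D` the cell embeddings of `M` are shifted first by `|D|` and then by
`|S|`, which is the shift by `|S ∘ D| = |S| + |D|`. -/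
lemma compL_compL {ss ds : Diagram} (sc dc : List (ℕ × List ℕ)) (h : ss.dim = ds.dim)
    {M : Diagram} (hM : ds.dim < M.dim) :
    compL (.step ss sc) (compL (.step ds dc) M) = compL (.step ss (sc ++ dc)) M := by
  induction M with
  | base g => simp [Diagram.dim] at hM
  | step ms mc ih =>
    by_cases hm : ds.dim = ms.dim
    · simp [compL, Diagram.dim, hm, vcomp, Diagram.cells, h]
    · have hlt : ds.dim < ms.dim := by simp only [Diagram.dim] at hM; omega
      simp only [compL, Diagram.dim, Diagram.size, dim_compL, h, hm, add_left_inj, if_false,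
        List.map_map, ih hlt]
      congr 1
      refine List.map_congr_left fun x _ => ?_
      simp [embComp_assoc_s16, embComp_incData, Nat.add_comm]

lemma comp_of_dim_le {X Y : Diagram} (h : X.dim ≤ Y.dim) : comp X Y = compL X Y :=
  if_pos h

theorem inc_comp_general (D S M : Diagram)
    (hdim : S.dim = D.dim) (h0 : 0 < D.dim) (hl : D.dim < M.dim) :
    embComp (incData S.dim S.size M.dim) (incData D.dim D.size M.dim)
        = incData (comp S D).dim (comp S D).size M.dim ∧
      comp S (comp D M) = comp (comp S D) M := by
  obtain ⟨ds, dc, rfl⟩ : ∃ ds dc, D = .step ds dc := by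
    cases D with
    | base g => simp [Diagram.dim] at h0
    | step s c => exact ⟨s, c, rfl⟩
  obtain ⟨ss, sc, rfl⟩ : ∃ ss sc, S = .step ss sc := by
    cases S with
    | base g => simp [Diagram.dim] at hdim
    | step s c => exact ⟨s, c, rfl⟩
  have hd : ss.dim = ds.dim := by simpa [Diagram.dim] using hdim
  have hSD : comp (.step ss sc) (.step ds dc) = .step ss (sc ++ dc) := by
    simp [comp, compL, vcomp, Diagram.dim, Diagram.cells, hd]
  refine ⟨?_, ?_⟩
  · simp only [hSD, Diagram.dim, Diagram.size, hd, List.length_append, embComp_incData]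
  · have hl' : ds.dim < M.dim := by simp only [Diagram.dim] at hl; omega
    rw [hSD, comp_of_dim_le hl.le, comp_of_dim_le (by rw [dim_compL]; omega),
      comp_of_dim_le (by simp only [Diagram.dim]; omega), compL_compL sc dc hd hl']

/-- **Composition of inclusions.**  For well-defined n-diagrams `D, S` and a
well-defined l-diagram `M` with `l > n` such that the composites exist,
`inc(S, D∘M) ∘ inc(D, M) = inc(S∘D, M)` as embeddings
`M ↪ S∘(D∘M) = (S∘D)∘M` (equivalence of embeddings: the height data agrees
and the codomains agree). -/
theorem inc_comp (σ : Signature) (D S M : Diagram)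
    (hdim : S.dim = D.dim) (h0 : 0 < D.dim) (hl : D.dim < M.dim)
    (hD : wdDiagram σ D) (hS : wdDiagram σ S) (hM : wdDiagram σ M)
    (hSD : tgt σ S = D.src)
    (hDM : tgt σ D = srcIter (M.dim - D.dim + 1) M) :
    embComp (incData S.dim S.size M.dim) (incData D.dim D.size M.dim)
        = incData (comp S D).dim (comp S D).size M.dim ∧
      comp S (comp D M) = comp (comp S D) M :=
  inc_comp_general D S M hdim h0 hl

end QS
end
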